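/- arXiv:1501.07840 — 2 statements merged into one kernel-verified Lean document; each statement's English description precedes it below -/
import Mathlib

section
/- (Lemma 6.9, continued: free convolution preserves bounded densities) Let μ, ν be compactly supported probability measures on ℝ and suppose μ is absolutely continuous with respect to Lebesgue measure with density bounded by M. Let (m, S_μ, S_ν) be the subordination triple for (μ, ν), and let ρ be a probability measure on ℝ whose Stieltjes transform equals m on ℂ⁺ (i.e. ρ = μ ⊞ ν). Then ρ is absolutely continuous with respect to Lebesgue measure with density bounded by M. -/
/-!
A measure on `ℝ` is absolutely continuous with density at most `M` exactly when it is dominated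
by `M • volume`. For such a `μ`, `Im m_μ(w)` is the `μ`-integral of the Poisson kernel of the
upper half-plane, which has total mass `π`, so `Im m_μ ≤ π M` on `ℂ⁺`. Since
`m_ρ(z) = m_μ(z + S_ν(z))` with `z + S_ν(z) ∈ ℂ⁺`, also `Im m_ρ ≤ π M` on `ℂ⁺`, and Stieltjes
inversion turns this into `ρ (a, b) ≤ M (b - a)`, i.e. `ρ ≤ M • volume`.
-/

open MeasureTheory

noncomputable section

/-- The Stieltjes transform `m_μ(z) = ∫ (t − z)⁻¹ dμ(t)` of a measure on `ℝ`. -/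
def stP (μ : Measure ℝ) (z : ℂ) : ℂ := ∫ t, ((t : ℂ) - z)⁻¹ ∂μ

/-- The Stieltjes transform of a finite signed measure on `ℝ`. -/
def stS (ν : SignedMeasure ℝ) (z : ℂ) : ℂ :=
  stP ν.toJordanDecomposition.posPart z - stP ν.toJordanDecomposition.negPart z

/-- The symmetrization `μ^s(X) = (μ(X) + μ(−X))/2` of a measure on `ℝ`. -/
def symmM (μ : Measure ℝ) : Measure ℝ :=
  (2 : ENNReal)⁻¹ • (μ + Measure.map (fun x : ℝ => -x) μ)

/-- A measure on `ℝ` is compactly supported. -/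
def HasCompactSupportM (μ : Measure ℝ) : Prop := ∃ R : ℝ, μ {x : ℝ | R < |x|} = 0

/-- `(m, Sμ, Sν)` is the subordination triple for the pair `(μ, ν)` of compactly supported
probability measures on `ℝ`: the three functions are analytic on `ℂ⁺`, satisfy the
subordination system, the prescribed asymptotics as `|z| → ∞`, and `Sμ, Sν` take values
in the closed upper half-plane.  Such a triple exists and is unique, and `m` is the
Stieltjes transform of the free convolution `μ ⊞ ν`. -/
structure IsSubTriple (μ ν : Measure ℝ) (m Sμ Sν : ℂ → ℂ) : Prop where
  diff_m : DifferentiableOn ℂ m {z : ℂ | 0 < z.im}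
  diff_Sμ : DifferentiableOn ℂ Sμ {z : ℂ | 0 < z.im}
  diff_Sν : DifferentiableOn ℂ Sν {z : ℂ | 0 < z.im}
  eq1 : ∀ z : ℂ, 0 < z.im → m z = stP μ (z + Sν z)
  eq2 : ∀ z : ℂ, 0 < z.im → m z = stP ν (z + Sμ z)
  eq3 : ∀ z : ℂ, 0 < z.im → -(z + (m z)⁻¹) = Sμ z + Sν z
  asympt_m : ∃ C R : ℝ, ∀ z : ℂ, 0 < z.im → R ≤ ‖z‖ →
      ‖m z + z⁻¹‖ ≤ C / ‖z‖ ^ 2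
  asympt_S : ∃ C R : ℝ, ∀ z : ℂ, 0 < z.im → R ≤ ‖z‖ →
      ‖Sμ z‖ + ‖Sν z‖ ≤ C
  im_Sμ : ∀ z : ℂ, 0 < z.im → 0 ≤ (Sμ z).im
  im_Sν : ∀ z : ℂ, 0 < z.im → 0 ≤ (Sν z).im

/-- `κ_{μ,ν}(z)`, defined from the subordination functions `Sμ, Sν`. -/
def kappaF (μ ν : Measure ℝ) (Sμ Sν : ℂ → ℂ) (z : ℂ) : ℂ :=
  (deriv (stP μ) (z + Sν z) + deriv (stP ν) (z + Sμ z)) * ((z + Sμ z + Sν z) ^ 2)⁻¹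
    - deriv (stP μ) (z + Sν z) * deriv (stP ν) (z + Sμ z)

/-- `α_{μ,ν}(z)`. -/
def alphaF (μ ν : Measure ℝ) (Sμ Sν : ℂ → ℂ) (z : ℂ) : ℝ :=
  ((‖z + Sμ z + Sν z‖ ^ 2)⁻¹ + ‖deriv (stP μ) (z + Sν z)‖
      + ‖deriv (stP ν) (z + Sμ z)‖) / ‖kappaF μ ν Sμ Sν z‖

/-- `β_{μ,ν}(z)`. -/
def betaF (μ ν : Measure ℝ) (Sμ Sν : ℂ → ℂ) (z : ℂ) : ℝ :=
  (‖z + Sμ z + Sν z‖ ^ 3)⁻¹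
    + ‖deriv (deriv (stP μ)) (z + Sν z)‖
    + ‖deriv (deriv (stP ν)) (z + Sμ z)‖

/-- The singular values of an `N × N` complex matrix: the square roots of the eigenvalues
of the Hermitian matrix `Mᴴ M`. -/
def singVal {N : ℕ} (M : Matrix (Fin N) (Fin N) ℂ) (i : Fin N) : ℝ :=
  Real.sqrt ((Matrix.isHermitian_conjTranspose_mul_self M).eigenvalues i)

/-- The empirical singular value distribution `ν_M = N⁻¹ ∑ δ_{s_i}`. -/
def empSV {N : ℕ} (M : Matrix (Fin N) (Fin N) ℂ) : Measure ℝ :=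
  ((N : ENNReal))⁻¹ • ∑ i : Fin N, Measure.dirac (singVal M i)

open Real Filter Set Topology
open scoped ENNReal NNReal

lemma MeasureTheory.Measure.le_smul_iff_absolutelyContinuous_and_rnDeriv_le {α : Type*}
    [MeasurableSpace α] {μ ν : Measure α} [SigmaFinite ν] [μ.HaveLebesgueDecomposition ν]
    {c : ℝ≥0∞} : μ ≤ c • ν ↔ μ ≪ ν ∧ ∀ᵐ x ∂ν, μ.rnDeriv ν x ≤ c := by
  constructor
  · intro h
    refine ⟨Measure.absolutelyContinuous_of_le_smul h,
      ae_le_of_forall_setLIntegral_le_of_sigmaFinite (μ.measurable_rnDeriv ν) fun s _ _ => ?_⟩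
    calc ∫⁻ x in s, μ.rnDeriv ν x ∂ν ≤ μ s := Measure.setLIntegral_rnDeriv_le s
      _ ≤ (c • ν) s := h s
      _ = ∫⁻ _ in s, c ∂ν := by rw [setLIntegral_const, Measure.smul_apply, smul_eq_mul]
  · rintro ⟨hac, hc⟩
    calc μ = ν.withDensity (μ.rnDeriv ν) := (Measure.withDensity_rnDeriv_eq μ ν hac).symm
      _ ≤ ν.withDensity fun _ => c := withDensity_mono hc
      _ = c • ν := withDensity_const c

lemma measure_Ioc_le_of_forall_measure_Ioo_le {ρ : Measure ℝ} {M : ℝ}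
    (hρ : ∀ a b, ρ (Ioo a b) ≤ ENNReal.ofReal (M * (b - a))) (a b : ℝ) :
    ρ (Ioc a b) ≤ ENNReal.ofReal (M * (b - a)) := by
  have hlim : Tendsto (fun c => ENNReal.ofReal (M * (c - a))) (𝓝[>] b)
      (𝓝 (ENNReal.ofReal (M * (b - a)))) :=
    ((ENNReal.continuous_ofReal.comp (by fun_prop : Continuous fun c => M * (c - a))).tendsto
      b).mono_left nhdsWithin_le_nhds
  exact ge_of_tendsto hlim (eventually_nhdsWithin_of_forall fun c hc =>
    (measure_mono (Ioc_subset_Ioo_right hc)).trans (hρ a c))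

lemma StieltjesFunction.le_measure_of_forall_measure_Ioc_le (f : StieltjesFunction ℝ)
    {ρ : Measure ℝ} (hρ : ∀ a b, ρ (Ioc a b) ≤ ENNReal.ofReal (f b - f a)) : ρ ≤ f.measure := by
  have hle : ρ.toOuterMeasure ≤ f.outer := OuterMeasure.le_ofFunction.2 fun s => by
    rw [StieltjesFunction.length_eq]
    exact le_iInf fun a => le_iInf fun b => le_iInf fun hs =>
      (measure_mono fun x hx => hs ⟨hx, notMem_botSet_of_lt (sub_one_lt x)⟩).trans (hρ a b)
  refine Measure.le_iff'.2 fun s => ?_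
  rw [StieltjesFunction.measure_def]
  exact hle s

lemma le_smul_volume_of_forall_measure_Ioc_le {ρ : Measure ℝ} {M : ℝ} (hM : 0 ≤ M)
    (hρ : ∀ a b, ρ (Ioc a b) ≤ ENNReal.ofReal (M * (b - a))) :
    ρ ≤ ENNReal.ofReal M • volume := by
  calc ρ ≤ (M.toNNReal • StieltjesFunction.id).measure :=
        StieltjesFunction.le_measure_of_forall_measure_Ioc_le _ fun a b => by
          convert hρ a b using 2
          change (M.toNNReal : ℝ) * b - M.toNNReal * a = _
          rw [Real.coe_toNNReal _ hM, mul_sub]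
    _ = ENNReal.ofReal M • volume := by
        rw [StieltjesFunction.measure_smul, ← Real.volume_eq_stieltjes_id]
        rfl

def halfPlanePoissonKernel (η x : ℝ) : ℝ := η / (x ^ 2 + η ^ 2)

section HalfPlanePoissonKernel

variable {η : ℝ}

lemma halfPlanePoissonKernel_nonneg (hη : 0 ≤ η) (x : ℝ) : 0 ≤ halfPlanePoissonKernel η x := by
  unfold halfPlanePoissonKernel; positivity

lemma continuous_halfPlanePoissonKernel (hη : 0 < η) : Continuous (halfPlanePoissonKernel η) :=
  continuous_const.div (by fun_prop) fun x => by positivity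

lemma halfPlanePoissonKernel_eq_inv_mul (hη : η ≠ 0) (x : ℝ) :
    halfPlanePoissonKernel η x = η⁻¹ * (1 + (x / η) ^ 2)⁻¹ := by
  unfold halfPlanePoissonKernel; field_simp; ring

lemma intervalIntegral_halfPlanePoissonKernel (hη : 0 < η) (a b : ℝ) :
    ∫ x in a..b, halfPlanePoissonKernel η x = arctan (b / η) - arctan (a / η) := by
  simp_rw [halfPlanePoissonKernel_eq_inv_mul hη.ne', intervalIntegral.integral_const_mul,
    intervalIntegral.integral_comp_div (fun y => (1 + y ^ 2)⁻¹) hη.ne', integral_inv_one_add_sq,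
    smul_eq_mul]
  field_simp

lemma integral_halfPlanePoissonKernel (hη : 0 < η) : ∫ x, halfPlanePoissonKernel η x = π := by
  simp_rw [halfPlanePoissonKernel_eq_inv_mul hη.ne', integral_const_mul,
    Measure.integral_comp_div (fun y => (1 + y ^ 2)⁻¹) η, integral_univ_inv_one_add_sq,
    smul_eq_mul, abs_of_pos hη]
  field_simp

lemma lintegral_halfPlanePoissonKernel (hη : 0 < η) :
    ∫⁻ x, ENNReal.ofReal (halfPlanePoissonKernel η x) = ENNReal.ofReal π := by
  have hint : Integrable (halfPlanePoissonKernel η) :=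
    Integrable.of_integral_ne_zero (by rw [integral_halfPlanePoissonKernel hη]; exact pi_ne_zero)
  rw [← ofReal_integral_eq_lintegral_ofReal hint
    (ae_of_all _ (halfPlanePoissonKernel_nonneg hη.le)), integral_halfPlanePoissonKernel hη]

lemma lintegral_Ioc_halfPlanePoissonKernel (hη : 0 < η) {a b : ℝ} (hab : a ≤ b) (t : ℝ) :
    ∫⁻ x in Ioc a b, ENNReal.ofReal (halfPlanePoissonKernel η (t - x))
      = ENNReal.ofReal (arctan ((t - a) / η) - arctan ((t - b) / η)) := by
  have hcont : Continuous fun x => halfPlanePoissonKernel η (t - x) :=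
    (continuous_halfPlanePoissonKernel hη).comp (continuous_sub_left t)
  rw [← ofReal_integral_eq_lintegral_ofReal hcont.integrableOn_Ioc
      (ae_of_all _ fun x => halfPlanePoissonKernel_nonneg hη.le _),
    ← intervalIntegral.integral_of_le hab,
    intervalIntegral.integral_comp_sub_left (halfPlanePoissonKernel η),
    intervalIntegral_halfPlanePoissonKernel hη]

lemma im_inv_ofReal_sub (t : ℝ) (w : ℂ) :
    ((t : ℂ) - w)⁻¹.im = halfPlanePoissonKernel w.im (t - w.re) := by
  simp [halfPlanePoissonKernel, Complex.inv_im, Complex.normSq_apply]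
  ring

end HalfPlanePoissonKernel

section StieltjesTransform

variable {ρ : Measure ℝ} [IsFiniteMeasure ρ] {w : ℂ}

lemma integrable_inv_ofReal_sub (hw : 0 < w.im) :
    Integrable (fun t : ℝ => ((t : ℂ) - w)⁻¹) ρ := by
  have hne : ∀ t : ℝ, (t : ℂ) - w ≠ 0 := fun t h => by
    simpa [hw.ne'] using congrArg Complex.im h
  refine (integrable_const (w.im)⁻¹).mono'
    ((Complex.continuous_ofReal.sub continuous_const).inv₀ hne).aestronglyMeasurable
    (ae_of_all _ fun t => ?_)
  rw [norm_inv]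
  refine inv_anti₀ hw ?_
  simpa [abs_of_pos hw] using Complex.abs_im_le_norm ((t : ℂ) - w)

lemma ofReal_im_stP (hw : 0 < w.im) :
    ENNReal.ofReal (stP ρ w).im
      = ∫⁻ t, ENNReal.ofReal (halfPlanePoissonKernel w.im (t - w.re)) ∂ρ := by
  have hint := integrable_inv_ofReal_sub (ρ := ρ) hw
  have him : (stP ρ w).im = ∫ t, halfPlanePoissonKernel w.im (t - w.re) ∂ρ := by
    simp_rw [stP, ← im_inv_ofReal_sub]
    exact (integral_im hint).symm
  rw [him, ofReal_integral_eq_lintegral_ofReal (by simpa [← im_inv_ofReal_sub] using hint.im)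
    (ae_of_all _ fun t => halfPlanePoissonKernel_nonneg hw.le _)]

lemma im_stP_le_of_le_smul_volume {M : ℝ} (hM : 0 ≤ M) (hρ : ρ ≤ ENNReal.ofReal M • volume)
    (hw : 0 < w.im) : (stP ρ w).im ≤ π * M := by
  rw [← ENNReal.ofReal_le_ofReal_iff (by positivity), ofReal_im_stP hw]
  calc ∫⁻ t, ENNReal.ofReal (halfPlanePoissonKernel w.im (t - w.re)) ∂ρ
      ≤ ∫⁻ t, ENNReal.ofReal (halfPlanePoissonKernel w.im (t - w.re))
          ∂(ENNReal.ofReal M • volume) :=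
        lintegral_mono' hρ le_rfl
    _ = ENNReal.ofReal M * ENNReal.ofReal π := by
        rw [lintegral_smul_measure, smul_eq_mul,
          lintegral_sub_right_eq_self (fun t => ENNReal.ofReal (halfPlanePoissonKernel w.im t)),
          lintegral_halfPlanePoissonKernel hw]
    _ = ENNReal.ofReal (π * M) := by rw [mul_comm, ENNReal.ofReal_mul pi_pos.le]

end StieltjesTransform

/-- The left-hand side is `∫ₐᵇ Im m_ρ(x + iη) dx`, by Fubini. As `η → 0⁺` its integrand tends to
`π` on `(a, b)`: this is Stieltjes inversion. -/
lemma lintegral_arctan_sub_arctan_le {ρ : Measure ℝ} [IsFiniteMeasure ρ] {M : ℝ}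
    (hρ : ∀ w : ℂ, 0 < w.im → (stP ρ w).im ≤ π * M) {η : ℝ} (hη : 0 < η) {a b : ℝ}
    (hab : a ≤ b) :
    ∫⁻ t, ENNReal.ofReal (arctan ((t - a) / η) - arctan ((t - b) / η)) ∂ρ
      ≤ ENNReal.ofReal (π * M) * ENNReal.ofReal (b - a) := by
  have hP : ∀ x, ∫⁻ t, ENNReal.ofReal (halfPlanePoissonKernel η (t - x)) ∂ρ
      ≤ ENNReal.ofReal (π * M) := fun x => by
    have hw : 0 < ((x : ℂ) + η * Complex.I).im := by simpa using hη
    simpa [ofReal_im_stP hw] using ENNReal.ofReal_le_ofReal (hρ _ hw)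
  calc ∫⁻ t, ENNReal.ofReal (arctan ((t - a) / η) - arctan ((t - b) / η)) ∂ρ
      = ∫⁻ t, ∫⁻ x in Ioc a b, ENNReal.ofReal (halfPlanePoissonKernel η (t - x)) ∂volume ∂ρ := by
        simp_rw [lintegral_Ioc_halfPlanePoissonKernel hη hab]
    _ = ∫⁻ x in Ioc a b, ∫⁻ t, ENNReal.ofReal (halfPlanePoissonKernel η (t - x)) ∂ρ ∂volume :=
        lintegral_lintegral_swap (Measurable.aemeasurable <|
          ((continuous_halfPlanePoissonKernel hη).comp
            (continuous_fst.sub continuous_snd)).measurable.ennreal_ofReal)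
    _ ≤ ∫⁻ x in Ioc a b, ENNReal.ofReal (π * M) := lintegral_mono hP
    _ = ENNReal.ofReal (π * M) * ENNReal.ofReal (b - a) := by
        rw [setLIntegral_const, Real.volume_Ioc]

lemma tendsto_arctan_mul_sub_arctan_mul {a b t : ℝ} (hat : a < t) (htb : t < b) :
    Tendsto (fun n : ℕ => arctan ((t - a) * (n + 1)) - arctan ((t - b) * (n + 1))) atTop
      (𝓝 π) := by
  have hn : Tendsto (fun n : ℕ => (n : ℝ) + 1) atTop atTop :=
    tendsto_atTop_add_const_right _ 1 tendsto_natCast_atTop_atTop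
  have hpos := (tendsto_arctan_atTop.mono_right nhdsWithin_le_nhds).comp
    (hn.const_mul_atTop (sub_pos.2 hat))
  have hneg := (tendsto_arctan_atBot.mono_right nhdsWithin_le_nhds).comp
    (hn.const_mul_atTop_of_neg (sub_neg.2 htb))
  rw [show π = π / 2 - -(π / 2) by ring]
  exact hpos.sub hneg

lemma measure_Ioo_le_of_im_stP_le {ρ : Measure ℝ} [IsFiniteMeasure ρ] {M : ℝ}
    (hρ : ∀ w : ℂ, 0 < w.im → (stP ρ w).im ≤ π * M) (a b : ℝ) :
    ρ (Ioo a b) ≤ ENNReal.ofReal (M * (b - a)) := by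
  rcases le_or_gt b a with hba | hab
  · rw [Ioo_eq_empty_of_le hba, measure_empty]; exact zero_le
  set F : ℕ → ℝ → ℝ≥0∞ := fun n t =>
    ENNReal.ofReal (arctan ((t - a) * (n + 1)) - arctan ((t - b) * (n + 1)))
  have hF_meas : ∀ n, Measurable (F n) := fun n => by fun_prop
  have hF_lim : ∀ t ∈ Ioo a b, Tendsto (fun n => F n t) atTop (𝓝 (ENNReal.ofReal π)) :=
    fun t ht => (ENNReal.continuous_ofReal.tendsto π).comp
      (tendsto_arctan_mul_sub_arctan_mul ht.1 ht.2)
  have hF_int : ∀ n, ∫⁻ t, F n t ∂ρ ≤ ENNReal.ofReal (π * M) * ENNReal.ofReal (b - a) :=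
    fun n => by
      simpa only [div_inv_eq_mul] using
        lintegral_arctan_sub_arctan_le hρ (η := ((n : ℝ) + 1)⁻¹) (by positivity) hab.le
  have hfatou :
      ENNReal.ofReal π * ρ (Ioo a b) ≤ ENNReal.ofReal π * ENNReal.ofReal (M * (b - a)) :=
    calc ENNReal.ofReal π * ρ (Ioo a b)
        = ∫⁻ t, (Ioo a b).indicator (fun _ => ENNReal.ofReal π) t ∂ρ := by
          rw [lintegral_indicator measurableSet_Ioo, setLIntegral_const]
      _ ≤ ∫⁻ t, liminf (fun n => F n t) atTop ∂ρ := by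
          refine lintegral_mono fun t => ?_
          by_cases ht : t ∈ Ioo a b
          · rw [indicator_of_mem ht, (hF_lim t ht).liminf_eq]
          · simp [indicator_of_notMem ht]
      _ ≤ liminf (fun n => ∫⁻ t, F n t ∂ρ) atTop := lintegral_liminf_le hF_meas
      _ ≤ ENNReal.ofReal (π * M) * ENNReal.ofReal (b - a) :=
          liminf_le_of_le (by isBoundedDefault) fun c hc =>
            hc.exists.elim fun n hn => hn.trans (hF_int n)
      _ = ENNReal.ofReal π * ENNReal.ofReal (M * (b - a)) := by
          rw [ENNReal.ofReal_mul pi_pos.le, ENNReal.ofReal_mul' (sub_nonneg.2 hab.le), mul_assoc]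
  exact (ENNReal.mul_le_mul_iff_right (ENNReal.ofReal_pos.2 pi_pos).ne' ENNReal.ofReal_ne_top).1
    hfatou

lemma le_smul_volume_of_im_stP_le {ρ : Measure ℝ} [IsFiniteMeasure ρ] {M : ℝ} (hM : 0 ≤ M)
    (hρ : ∀ w : ℂ, 0 < w.im → (stP ρ w).im ≤ π * M) : ρ ≤ ENNReal.ofReal M • volume :=
  le_smul_volume_of_forall_measure_Ioc_le hM <|
    measure_Ioc_le_of_forall_measure_Ioo_le (measure_Ioo_le_of_im_stP_le hρ)

theorem free_convolution_preserves_bounded_density_general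
    (μ ν : Measure ℝ) (hμp : IsProbabilityMeasure μ)
    (M : ℝ) (hM : 0 < M)
    (hμd : μ ≪ (volume : Measure ℝ) ∧
      ∀ᵐ x ∂(volume : Measure ℝ), μ.rnDeriv volume x ≤ ENNReal.ofReal M)
    (m Sμ Sν : ℂ → ℂ) (htriple : IsSubTriple μ ν m Sμ Sν)
    (ρ : Measure ℝ) (hρp : IsProbabilityMeasure ρ)
    (hρm : ∀ z : ℂ, 0 < z.im → stP ρ z = m z) :
    ρ ≪ (volume : Measure ℝ) ∧
      ∀ᵐ x ∂(volume : Measure ℝ), ρ.rnDeriv volume x ≤ ENNReal.ofReal M := by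
  have hμ : μ ≤ ENNReal.ofReal M • volume :=
    Measure.le_smul_iff_absolutelyContinuous_and_rnDeriv_le.2 hμd
  have him : ∀ z : ℂ, 0 < z.im → (stP ρ z).im ≤ π * M := fun z hz => by
    rw [hρm z hz, htriple.eq1 z hz]
    exact im_stP_le_of_le_smul_volume hM.le hμ
      (by simpa using add_pos_of_pos_of_nonneg hz (htriple.im_Sν z hz))
  exact Measure.le_smul_iff_absolutelyContinuous_and_rnDeriv_le.1
    (le_smul_volume_of_im_stP_le hM.le him)

/-- **Lemma 6.9, continued (free convolution preserves bounded densities).**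
If `μ` has a density bounded by `M` and `ρ = μ ⊞ ν` (characterized by the subordination
triple), then `ρ` has a density bounded by `M`. -/
theorem free_convolution_preserves_bounded_density
    (μ ν : Measure ℝ) (hμp : IsProbabilityMeasure μ) (hνp : IsProbabilityMeasure ν)
    (hμc : HasCompactSupportM μ) (hνc : HasCompactSupportM ν)
    (M : ℝ) (hM : 0 < M)
    (hμd : μ ≪ (volume : Measure ℝ) ∧
      ∀ᵐ x ∂(volume : Measure ℝ), μ.rnDeriv volume x ≤ ENNReal.ofReal M)
    (m Sμ Sν : ℂ → ℂ) (htriple : IsSubTriple μ ν m Sμ Sν)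
    (ρ : Measure ℝ) (hρp : IsProbabilityMeasure ρ)
    (hρm : ∀ z : ℂ, 0 < z.im → stP ρ z = m z) :
    ρ ≪ (volume : Measure ℝ) ∧
      ∀ᵐ x ∂(volume : Measure ℝ), ρ.rnDeriv volume x ≤ ENNReal.ofReal M :=
  free_convolution_preserves_bounded_density_general μ ν hμp M hM hμd m Sμ Sν htriple ρ hρp hρm
end
end

section
/- (Theorem 6.14, Hadamard three circles argument for Stieltjes transforms) Let a > 0 and let c₀ > 0. There exists δ_0 > 0 depending only on c₀ such that for every δ ∈ (0, δ_0) and every finite signed measure ν on ℝ with 2‖ν‖_TV / a ≤ c₀, setting c := 2‖ν‖_TV / a and r(δ) := exp(−4√(c/|log δ|)), the following holds: if sup{ |m_ν(z)| : z = i a (e + e^{iθ})/(e − e^{iθ}), θ ∈ [0, 2π] } ≤ δ, then sup_{z ∈ H_{a, r(δ)}} |m_ν(z)| ≤ exp(−√(c |log δ|)), where for r ∈ (0,1), H_{a,r} denotes the closed disc in ℂ⁺ with center i a (1 + r²)/(1 − r²) and radius 2ar/(1 − r²) (equivalently, the disc with diameter the segment [i a (1−r)/(1+r), i a (1+r)/(1−r)]).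 -/
/-!
Pull the transform back to the unit disc by the Cayley map `w ↦ i a (1 + w) / (1 - w)`: the
ring points become the circle `|w| = e⁻¹`, the disc `H_{a,r}` becomes `|w| ≤ r`, and since the
image of `w` has imaginary part at least `a (1 - |w|²) / 4`, the pulled-back function `f` is
holomorphic on the unit disc with `|f w| ≤ 2c / (1 - |w|²)`. By the maximum modulus principle
`|f| ≤ δ` on `|w| ≤ e⁻¹`. With `x = √(c / |log δ|)`, on the circle `|w| = e^{-2x}` one has
`|f| ≤ 2c / x = 2x |log δ| ≤ e^{x |log δ|}`, and Hadamard's three circles theorem, obtained from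
the three lines theorem through `exp`, interpolates between the two circles to give
`|f| ≤ e^{-x |log δ|} = e^{-√(c |log δ|)}` on `|w| ≤ e^{-4x} = r`.
-/

open MeasureTheory

noncomputable section

/-- The point `i a (e + e^{iθ})/(e − e^{iθ})` of `ℂ⁺`. -/
def ringPt (a θ : ℝ) : ℂ :=
  Complex.I * (a : ℂ) * ((Real.exp 1 : ℂ) + Complex.exp (Complex.I * θ)) /
    ((Real.exp 1 : ℂ) - Complex.exp (Complex.I * θ))


open Complex Metric Set Filter Topology

section StieltjesTransform

lemma im_le_norm_ofReal_sub (t : ℝ) (z : ℂ) : z.im ≤ ‖(t : ℂ) - z‖ :=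
  (le_abs_self z.im).trans (by simpa using abs_im_le_norm ((t : ℂ) - z))

lemma norm_inv_ofReal_sub_le {z : ℂ} (hz : 0 < z.im) (t : ℝ) :
    ‖((t : ℂ) - z)⁻¹‖ ≤ z.im⁻¹ := by
  rw [norm_inv]
  exact inv_anti₀ hz (im_le_norm_ofReal_sub t z)

variable (μ : Measure ℝ) [IsFiniteMeasure μ]

lemma norm_stP_le {z : ℂ} (hz : 0 < z.im) : ‖stP μ z‖ ≤ (μ univ).toReal / z.im := by
  rw [div_eq_inv_mul]
  exact norm_integral_le_of_norm_le_const (Eventually.of_forall (norm_inv_ofReal_sub_le hz))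

lemma differentiableAt_stP {z : ℂ} (hz : 0 < z.im) : DifferentiableAt ℂ (stP μ) z := by
  set ε := z.im / 2
  have hε : 0 < ε := by positivity
  have hs : {x : ℂ | ε < x.im} ∈ 𝓝 z :=
    (isOpen_lt continuous_const continuous_im).mem_nhds (half_lt_self hz)
  have hmeas (x : ℂ) : AEStronglyMeasurable (fun t : ℝ => ((t : ℂ) - x)⁻¹) μ :=
    (measurable_ofReal.sub_const x).inv.aestronglyMeasurable
  refine (hasDerivAt_integral_of_dominated_loc_of_deriv_le (bound := fun _ => (ε ^ 2)⁻¹)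
    (F' := fun x (t : ℝ) => (((t : ℂ) - x) ^ 2)⁻¹) hs (Eventually.of_forall hmeas)
    ((integrable_const z.im⁻¹).mono' (hmeas z) (Eventually.of_forall (norm_inv_ofReal_sub_le hz)))
    ((measurable_ofReal.sub_const z).pow_const 2).inv.aestronglyMeasurable ?_
    (integrable_const _) ?_).2.differentiableAt
  · refine Eventually.of_forall fun t x (hx : ε < x.im) => ?_
    rw [norm_inv, norm_pow]
    exact inv_anti₀ (by positivity)
      (pow_le_pow_left₀ hε.le (hx.le.trans (im_le_norm_ofReal_sub t x)) 2)
  · refine Eventually.of_forall fun t x (hx : ε < x.im) => ?_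
    have hne : (t : ℂ) - x ≠ 0 :=
      norm_pos_iff.mp ((hε.trans hx).trans_le (im_le_norm_ofReal_sub t x))
    simpa using ((hasDerivAt_id x).const_sub (t : ℂ)).fun_inv hne

end StieltjesTransform

def cayley (a : ℝ) (w : ℂ) : ℂ := I * a * (1 + w) / (1 - w)

lemma im_cayley (a : ℝ) (w : ℂ) : (cayley a w).im = a * (1 - ‖w‖ ^ 2) / normSq (1 - w) := by
  rw [cayley, div_im, Complex.sq_norm]
  simp only [mul_im, mul_re, I_re, I_im, ofReal_re, ofReal_im, add_re, add_im, sub_re, sub_im,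
    one_re, one_im, normSq_apply]
  ring

section Cayley

variable {a : ℝ} {w : ℂ}

lemma le_im_cayley (ha : 0 ≤ a) (hw : ‖w‖ < 1) : a * (1 - ‖w‖ ^ 2) / 4 ≤ (cayley a w).im := by
  have hw₀ : 1 - w ≠ 0 := sub_ne_zero.2 fun h => by simp [← h] at hw
  have h2 : ‖1 - w‖ ≤ 2 := (norm_sub_le _ _).trans (by simp; linarith)
  rw [im_cayley, ← Complex.sq_norm]
  exact div_le_div_of_nonneg_left (mul_nonneg ha (by nlinarith [norm_nonneg w]))
    (by positivity) (by nlinarith [norm_nonneg (1 - w)])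

lemma im_cayley_pos (ha : 0 < a) (hw : ‖w‖ < 1) : 0 < (cayley a w).im := by
  have : 0 < 1 - ‖w‖ ^ 2 := by nlinarith [norm_nonneg w]
  exact (by positivity : 0 < a * (1 - ‖w‖ ^ 2) / 4).trans_le (le_im_cayley ha.le hw)

lemma differentiableAt_cayley (hw : ‖w‖ < 1) : DifferentiableAt ℂ (cayley a) w :=
  (by fun_prop : DifferentiableAt ℂ (fun w => I * a * (1 + w)) w).div (by fun_prop)
    (sub_ne_zero.2 fun h => by simp [← h] at hw)

lemma ringPt_eq_cayley (a θ : ℝ) : ringPt a θ = cayley a (Real.exp (-1) * exp (θ * I)) := by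
  have he : (Real.exp 1 : ℂ) ≠ 0 := ofReal_ne_zero.2 (Real.exp_pos 1).ne'
  rw [ringPt, cayley, Real.exp_neg, ofReal_inv, eq_comm, ← mul_div_mul_left _ _ he]
  congr 1 <;> field_simp

lemma exists_cayley_eq_of_mem_closedBall (ha : 0 < a) {r : ℝ} (hr₀ : 0 ≤ r) (hr₁ : r < 1)
    {z : ℂ} (hz : z ∈ closedBall (I * a * (((1 + r ^ 2) / (1 - r ^ 2) : ℝ) : ℂ))
      (2 * a * r / (1 - r ^ 2))) :
    ∃ w : ℂ, ‖w‖ ≤ r ∧ cayley a w = z := by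
  have hr : 0 < 1 - r ^ 2 := by nlinarith
  -- the disc is the Apollonius disc `‖z - i a‖ ≤ r ‖z + i a‖`
  have hapollonius : ‖z - I * a‖ ^ 2 - r ^ 2 * ‖z + I * a‖ ^ 2 =
      (1 - r ^ 2) * (‖z - I * a * (((1 + r ^ 2) / (1 - r ^ 2) : ℝ) : ℂ)‖ ^ 2
        - (2 * a * r / (1 - r ^ 2)) ^ 2) := by
    simp only [Complex.sq_norm, normSq_apply, sub_re, add_re, mul_re, sub_im, add_im, mul_im,
      I_re, I_im, ofReal_re, ofReal_im]
    field_simp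
    ring
  have hle : ‖z - I * a‖ ≤ r * ‖z + I * a‖ := by
    rw [mem_closedBall, dist_eq] at hz
    have := pow_le_pow_left₀ (norm_nonneg _) hz 2
    refine (pow_le_pow_iff_left₀ (norm_nonneg _) (by positivity) two_ne_zero).1 ?_
    nlinarith
  have hne : z + I * a ≠ 0 := by
    intro h
    rw [h, norm_zero, mul_zero, norm_le_zero_iff, sub_eq_zero] at hle
    rw [hle] at h
    simp [ha.ne'] at h
  refine ⟨(z - I * a) / (z + I * a), ?_, ?_⟩
  · rwa [norm_div, div_le_iff₀ (norm_pos_iff.2 hne)]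
  · have ha' : (a : ℂ) ≠ 0 := ofReal_ne_zero.2 ha.ne'
    rw [cayley]
    field_simp
    ring

end Cayley

lemma exists_mem_Icc_eq_norm_mul_exp (v : ℂ) :
    ∃ θ ∈ Icc 0 (2 * Real.pi), v = ‖v‖ * exp (θ * I) := by
  refine ⟨toIcoMod Real.two_pi_pos 0 (arg v), Ico_subset_Icc_self ?_, ?_⟩
  · simpa using toIcoMod_mem_Ico Real.two_pi_pos 0 (arg v)
  · rw [← self_sub_toIcoDiv_zsmul, ofReal_sub, ofReal_zsmul, ofReal_mul, ofReal_ofNat,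
      exp_mul_I_periodic.sub_zsmul_eq, norm_mul_exp_arg_mul_I]

theorem norm_le_interp_of_mem_closedAnnulus {E : Type*} [NormedAddCommGroup E] [NormedSpace ℂ E]
    {f : ℂ → E} {r₁ r₂ M₁ M₂ : ℝ} (hr₁ : 0 < r₁) (hr : r₁ < r₂)
    (hf : DifferentiableOn ℂ f (closedBall 0 r₂ \ ball 0 r₁))
    (h₁ : ∀ w : ℂ, ‖w‖ = r₁ → ‖f w‖ ≤ M₁) (h₂ : ∀ w : ℂ, ‖w‖ = r₂ → ‖f w‖ ≤ M₂)
    {w : ℂ} (hw₁ : r₁ ≤ ‖w‖) (hw₂ : ‖w‖ ≤ r₂) :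
    ‖f w‖ ≤ M₁ ^ (1 - (Real.log ‖w‖ - Real.log r₁) / (Real.log r₂ - Real.log r₁)) *
      M₂ ^ ((Real.log ‖w‖ - Real.log r₁) / (Real.log r₂ - Real.log r₁)) := by
  have hr₂ : 0 < r₂ := hr₁.trans hr
  have hw : w ≠ 0 := norm_pos_iff.mp (hr₁.trans_le hw₁)
  have hexp : MapsTo exp (HadamardThreeLines.verticalClosedStrip (Real.log r₁) (Real.log r₂))
      (closedBall 0 r₂ \ ball 0 r₁) := by
    rintro ξ ⟨hξ₁, hξ₂⟩
    simp only [Set.mem_sdiff, mem_closedBall_zero_iff, mem_ball_zero_iff, norm_exp, not_lt]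
    exact ⟨(Real.le_log_iff_exp_le hr₂).mp hξ₂, (Real.log_le_iff_le_exp hr₁).mp hξ₁⟩
  have hg := hf.comp differentiable_exp.differentiableOn hexp
  have hbdd : BddAbove ((norm ∘ f) '' (closedBall 0 r₂ \ ball 0 r₁)) :=
    ((isCompact_closedBall 0 r₂).diff isOpen_ball).bddAbove_image
      (continuous_norm.comp_continuousOn hf.continuousOn)
  have := HadamardThreeLines.norm_le_interp_of_mem_verticalClosedStrip' (f := f ∘ exp)
    (z := log w) (a := M₁) (b := M₂) (Real.log_lt_log hr₁ hr)
    ⟨by rw [log_re]; exact Real.log_le_log hr₁ hw₁,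
      by rw [log_re]; exact Real.log_le_log (norm_pos_iff.2 hw) hw₂⟩
    (hg.mono (closure_minimal (fun ξ hξ => ⟨hξ.1.le, hξ.2.le⟩)
      (isClosed_Icc.preimage continuous_re))).diffContOnCl ?_ ?_ ?_
  · simpa [exp_log hw, log_re] using this
  · rw [← Function.comp_assoc, image_comp]
    exact hbdd.mono (image_mono hexp.image_subset)
  · intro ξ (hξ : ξ.re = Real.log r₁)
    exact h₁ _ (by rw [norm_exp, hξ, Real.exp_log hr₁])
  · intro ξ (hξ : ξ.re = Real.log r₂)
    exact h₂ _ (by rw [norm_exp, hξ, Real.exp_log hr₂])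

lemma le_one_sub_exp_neg_two_mul_sq {x : ℝ} (hx₀ : 0 ≤ x) (hx : x ≤ 3 / 4) :
    x ≤ 1 - Real.exp (-(2 * x)) ^ 2 := by
  have h := Real.add_one_le_exp (4 * x)
  rw [← Real.exp_nat_mul, show (2 : ℕ) * -(2 * x) = -(4 * x) by push_cast; ring, Real.exp_neg]
  calc x ≤ 1 - (4 * x + 1)⁻¹ := by
        rw [le_sub_comm, inv_le_iff_one_le_mul₀ (by positivity)]
        nlinarith
    _ ≤ 1 - (Real.exp (4 * x))⁻¹ := by gcongr

lemma two_mul_le_exp {u : ℝ} (hu : 0 ≤ u) : 2 * u ≤ Real.exp u := by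
  nlinarith [Real.quadratic_le_exp_of_nonneg hu]

section SignedMeasure

variable (ν : SignedMeasure ℝ)

lemma differentiableAt_stS {z : ℂ} (hz : 0 < z.im) : DifferentiableAt ℂ (stS ν) z :=
  (differentiableAt_stP _ hz).sub (differentiableAt_stP _ hz)

lemma norm_stS_le {z : ℂ} (hz : 0 < z.im) :
    ‖stS ν z‖ ≤ (ν.totalVariation univ).toReal / z.im := by
  rw [SignedMeasure.totalVariation, Measure.add_apply,
    ENNReal.toReal_add (measure_ne_top _ _) (measure_ne_top _ _), add_div]
  exact (norm_sub_le _ _).trans (add_le_add (norm_stP_le _ hz) (norm_stP_le _ hz))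

lemma stS_eq_zero_of_totalVariation_eq_zero (h : (ν.totalVariation univ).toReal = 0) (z : ℂ) :
    stS ν z = 0 := by
  rw [ENNReal.toReal_eq_zero_iff, or_iff_left (measure_ne_top _ _), SignedMeasure.totalVariation,
    Measure.add_apply, add_eq_zero] at h
  simp [stS, stP, Measure.measure_univ_eq_zero.mp h.1, Measure.measure_univ_eq_zero.mp h.2]

variable {a : ℝ} (ha : 0 < a)
include ha

lemma differentiableOn_stS_cayley :
    DifferentiableOn ℂ (fun w => stS ν (cayley a w)) (ball 0 1) := fun w hw => by
  rw [mem_ball_zero_iff] at hw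
  exact ((differentiableAt_stS ν (im_cayley_pos ha hw)).comp w
    (differentiableAt_cayley hw)).differentiableWithinAt

lemma norm_stS_cayley_le {w : ℂ} (hw : ‖w‖ < 1) :
    ‖stS ν (cayley a w)‖ ≤ 4 * (ν.totalVariation univ).toReal / (a * (1 - ‖w‖ ^ 2)) := by
  have : 0 < 1 - ‖w‖ ^ 2 := by nlinarith [norm_nonneg w]
  refine (norm_stS_le ν (im_cayley_pos ha hw)).trans ?_
  rw [mul_comm 4, ← div_div_eq_mul_div]
  exact div_le_div_of_nonneg_left ENNReal.toReal_nonneg (by positivity) (le_im_cayley ha.le hw)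

lemma norm_stS_cayley_le_of_ringPt {δ : ℝ}
    (hring : ∀ θ ∈ Icc 0 (2 * Real.pi), ‖stS ν (ringPt a θ)‖ ≤ δ)
    {w : ℂ} (hw : ‖w‖ ≤ Real.exp (-1)) : ‖stS ν (cayley a w)‖ ≤ δ := by
  have he : Real.exp (-1) ≠ 0 := (Real.exp_pos _).ne'
  have hdiff :
      DifferentiableOn ℂ (fun w => stS ν (cayley a w)) (closure (ball 0 (Real.exp (-1)))) :=
    (differentiableOn_stS_cayley ν ha).mono
      (closure_ball (0 : ℂ) he ▸ closedBall_subset_ball (Real.exp_lt_one_iff.2 (by norm_num)))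
  refine norm_le_of_forall_mem_frontier_norm_le isBounded_ball hdiff.diffContOnCl (fun v hv => ?_)
    (by rwa [closure_ball _ he, mem_closedBall_zero_iff])
  rw [frontier_ball _ he, mem_sphere_zero_iff_norm] at hv
  obtain ⟨θ, hθ, hvθ⟩ := exists_mem_Icc_eq_norm_mul_exp v
  rw [hvθ, hv, ← ringPt_eq_cayley]
  exact hring θ hθ

lemma norm_stS_cayley_le_exp_of_norm_eq {x L : ℝ} (hx₀ : 0 < x) (hx : x < 1 / 2) (hL : 0 ≤ L)
    (hν : 2 * (ν.totalVariation univ).toReal / a ≤ x ^ 2 * L)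
    {v : ℂ} (hv : ‖v‖ = Real.exp (-(2 * x))) : ‖stS ν (cayley a v)‖ ≤ Real.exp (x * L) := by
  set T := (ν.totalVariation univ).toReal
  calc ‖stS ν (cayley a v)‖ ≤ 4 * T / (a * (1 - ‖v‖ ^ 2)) :=
        norm_stS_cayley_le ν ha (hv ▸ Real.exp_lt_one_iff.2 (by linarith))
    _ = 2 * (2 * T / a) / (1 - Real.exp (-(2 * x)) ^ 2) := by rw [hv, mul_comm a, ← div_div]; ring
    _ ≤ 2 * (x ^ 2 * L) / x := by
        gcongr
        exact le_one_sub_exp_neg_two_mul_sq hx₀.le (by linarith)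
    _ = 2 * (x * L) := by field_simp
    _ ≤ Real.exp (x * L) := two_mul_le_exp (by positivity)

theorem norm_stS_cayley_le_exp {x L : ℝ} (hx₀ : 0 < x) (hx : x < 1 / 2)
    (hν : 2 * (ν.totalVariation univ).toReal / a ≤ x ^ 2 * L)
    (hring : ∀ θ ∈ Icc 0 (2 * Real.pi), ‖stS ν (ringPt a θ)‖ ≤ Real.exp (-L))
    {w : ℂ} (hw : ‖w‖ ≤ Real.exp (-(4 * x))) :
    ‖stS ν (cayley a w)‖ ≤ Real.exp (-(x * L)) := by
  set T := (ν.totalVariation univ).toReal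
  have hL : 0 ≤ L := by
    have : 0 ≤ 2 * T / a := by positivity
    nlinarith [sq_pos_of_pos hx₀]
  rcases le_or_gt ‖w‖ (Real.exp (-1)) with hinside | hannulus
  · exact (norm_stS_cayley_le_of_ringPt ν ha hring hinside).trans
      (Real.exp_le_exp.2 (by nlinarith))
  have hr₁ : Real.exp (-1) < Real.exp (-(2 * x)) := Real.exp_lt_exp.2 (by linarith)
  have hr₂ : Real.exp (-(2 * x)) < 1 := Real.exp_lt_one_iff.2 (by linarith)
  have h := norm_le_interp_of_mem_closedAnnulus (Real.exp_pos _) hr₁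
    ((differentiableOn_stS_cayley ν ha).mono (sdiff_subset.trans (closedBall_subset_ball hr₂)))
    (fun v hv => norm_stS_cayley_le_of_ringPt ν ha hring hv.le)
    (fun v hv => norm_stS_cayley_le_exp_of_norm_eq ν ha hx₀ hx hL hν hv)
    hannulus.le (hw.trans (Real.exp_le_exp.2 (by linarith)))
  rw [Real.log_exp, Real.log_exp] at h
  set t := (Real.log ‖w‖ - -1) / (-(2 * x) - -1)
  have ht : t ≤ 1 - 2 * x := by
    have := Real.log_le_log ((Real.exp_pos _).trans hannulus) hw
    rw [Real.log_exp] at this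
    rw [div_le_iff₀ (by linarith)]
    nlinarith
  calc ‖stS ν (cayley a w)‖ ≤ Real.exp (-L) ^ (1 - t) * Real.exp (x * L) ^ t := h
    _ = Real.exp (-L * (1 - t) + x * L * t) := by
      rw [← Real.exp_mul, ← Real.exp_mul, ← Real.exp_add]
    _ ≤ Real.exp (-(x * L)) := Real.exp_le_exp.2 <| by
      nlinarith [mul_le_mul_of_nonneg_left ht (by positivity : 0 ≤ L * (1 + x))]

end SignedMeasure

theorem hadamard_three_circles_stieltjes_general (a c₀ : ℝ) (ha : 0 < a) :
    ∃ δ₀ : ℝ, 0 < δ₀ ∧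
      ∀ δ : ℝ, 0 < δ → δ < δ₀ →
      ∀ ν : SignedMeasure ℝ,
      ∀ c r : ℝ,
        c = 2 * (ν.totalVariation Set.univ).toReal / a →
        r = Real.exp (-(4 * Real.sqrt (c / |Real.log δ|))) →
        c ≤ c₀ →
        (∀ θ ∈ Set.Icc (0 : ℝ) (2 * Real.pi),
          ‖stS ν (ringPt a θ)‖ ≤ δ) →
        ∀ z ∈ Metric.closedBall
            (Complex.I * (a : ℂ) * (((1 + r ^ 2) / (1 - r ^ 2) : ℝ) : ℂ))
            (2 * a * r / (1 - r ^ 2)),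
          ‖stS ν z‖ ≤ Real.exp (-Real.sqrt (c * |Real.log δ|)) := by
  refine ⟨Real.exp (-(4 * c₀)), Real.exp_pos _, fun δ hδ hδ₀ ν c r hc hr hcc₀ hring z hz => ?_⟩
  rcases (hc ▸ by positivity : 0 ≤ c).eq_or_lt with hc0 | hc0
  · rw [← hc0, eq_comm, div_eq_zero_iff] at hc
    simp [stS_eq_zero_of_totalVariation_eq_zero ν (by simpa [ha.ne'] using hc), (Real.exp_pos _).le]
  have hlogδ : Real.log δ < -(4 * c) := by
    have := Real.log_lt_log hδ hδ₀
    rw [Real.log_exp] at this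
    linarith
  set L := |Real.log δ| with hL_def
  rw [abs_of_neg (by linarith)] at hL_def
  have hL : 0 < L := by linarith
  have hδL : δ = Real.exp (-L) := by rw [hL_def, neg_neg, Real.exp_log hδ]
  set x := Real.sqrt (c / L)
  have hx₀ : 0 < x := Real.sqrt_pos.2 (div_pos hc0 hL)
  have hx : x < 1 / 2 := (Real.sqrt_lt' (by norm_num)).2 (by rw [div_lt_iff₀ hL]; linarith)
  have hcx : c = x ^ 2 * L := by rw [Real.sq_sqrt (by positivity)]; field_simp
  have hr' : r = Real.exp (-(4 * x)) := hr
  obtain ⟨w, hw, rfl⟩ := exists_cayley_eq_of_mem_closedBall ha (hr' ▸ (Real.exp_pos _).le)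
    (hr' ▸ Real.exp_lt_one_iff.2 (by linarith)) hz
  rw [show Real.sqrt (c * L) = x * L by
    rw [hcx, ← Real.sqrt_sq (by positivity : 0 ≤ x * L)]; ring_nf]
  exact norm_stS_cayley_le_exp ν ha hx₀ hx (hc ▸ hcx.le) (hδL ▸ hring) (hr' ▸ hw)

/-- **Theorem 6.14 (Hadamard three circles argument for Stieltjes transforms).**
Here `c = 2‖ν‖_TV/a`, `r = r(δ) = exp(−4√(c/|log δ|))`, and `H_{a,r}` is the closed disc
with center `i a (1 + r²)/(1 − r²)` and radius `2ar/(1 − r²)`. -/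
theorem hadamard_three_circles_stieltjes (a c₀ : ℝ) (ha : 0 < a) (hc₀ : 0 < c₀) :
    ∃ δ₀ : ℝ, 0 < δ₀ ∧
      ∀ δ : ℝ, 0 < δ → δ < δ₀ →
      ∀ ν : SignedMeasure ℝ,
      ∀ c r : ℝ,
        c = 2 * (ν.totalVariation Set.univ).toReal / a →
        r = Real.exp (-(4 * Real.sqrt (c / |Real.log δ|))) →
        c ≤ c₀ →
        (∀ θ ∈ Set.Icc (0 : ℝ) (2 * Real.pi),
          ‖stS ν (ringPt a θ)‖ ≤ δ) →
        ∀ z ∈ Metric.closedBall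
            (Complex.I * (a : ℂ) * (((1 + r ^ 2) / (1 - r ^ 2) : ℝ) : ℂ))
            (2 * a * r / (1 - r ^ 2)),
          ‖stS ν z‖ ≤ Real.exp (-Real.sqrt (c * |Real.log δ|)) :=
  hadamard_three_circles_stieltjes_general a c₀ ha
end
end
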